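/- Propagation of positivity and monotonicity for the 1D Boussinesq system: Let T > 0 and let g, P ∈ C³([0,T]×[−π/4,π/4]) be a classical solution pair of the 1D Boussinesq system with g(t,·) odd and P(t,·) even for all t ∈ [0,T]. Assume that at t = 0: g(0,·) ≥ 0, ∂_θ g(0,·) ≥ 0, P(0,·) ≥ 0, ∂_θ P(0,·) ≥ 0, and P(0,·) + ∂_{θθ}P(0,·) ≥ 0 on [0,π/4]. Then, for every t ∈ [0,T], one has g(t,·) ≥ 0, ∂_θ g(t,·) ≥ 0, P(t,·) ≥ 0, ∂_θ P(t,·) ≥ 0, and P(t,·) + ∂_{θθ}P(t,·) ≥ 0 on [0,π/4]. -/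

import Mathlib

open Set Real MeasureTheory
open scoped ENNReal NNReal Topology

noncomputable section

/-- The interval `[-π/4, π/4]`. -/
def I14 : Set ℝ := Icc (-(π/4)) (π/4)

/-- A classical solution of the 1D Boussinesq system
`∂ₜ g + 2G ∂_θ g = sin θ · P + cos θ · ∂_θ P`, `∂ₜ P + 2G ∂_θ P = P ∂_θ G` on the time set
`J`, on the interval `[-π/4, π/4]`, where for each `t`, `G(t,·)` is the unique odd `C²`
function with `∂_{θθ} G + 4G = g(t,·)` and `G(t, ±π/4) = 0`; `g(t,·)` is odd and `P(t,·)`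
is even. -/
structure OneDSol (J : Set ℝ) (g P G : ℝ → ℝ → ℝ) : Prop where
  g_odd : ∀ t ∈ J, ∀ θ ∈ I14, g t (-θ) = - g t θ
  P_even : ∀ t ∈ J, ∀ θ ∈ I14, P t (-θ) = P t θ
  G_odd : ∀ t ∈ J, ∀ θ ∈ I14, G t (-θ) = - G t θ
  G_C2 : ∀ t ∈ J, ContDiffOn ℝ 2 (G t) I14
  G_eq : ∀ t ∈ J, ∀ θ ∈ I14, iteratedDerivWithin 2 (G t) I14 θ + 4 * G t θ = g t θ
  G_bc₁ : ∀ t ∈ J, G t (π/4) = 0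
  G_bc₂ : ∀ t ∈ J, G t (-(π/4)) = 0
  reg_g : ∀ t ∈ J, DifferentiableOn ℝ (g t) I14
  reg_P : ∀ t ∈ J, DifferentiableOn ℝ (P t) I14
  reg_gt : ∀ θ ∈ I14, ∀ t ∈ J, DifferentiableWithinAt ℝ (fun s => g s θ) J t
  reg_Pt : ∀ θ ∈ I14, ∀ t ∈ J, DifferentiableWithinAt ℝ (fun s => P s θ) J t
  eq_g : ∀ t ∈ J, ∀ θ ∈ I14,
    derivWithin (fun s => g s θ) J t + 2 * G t θ * derivWithin (g t) I14 θ
      = Real.sin θ * P t θ + Real.cos θ * derivWithin (P t) I14 θ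
  eq_P : ∀ t ∈ J, ∀ θ ∈ I14,
    derivWithin (fun s => P s θ) J t + 2 * G t θ * derivWithin (P t) I14 θ
      = P t θ * derivWithin (G t) I14 θ

/-- Sup-norm over `[-π/4, π/4]`, valued in `ℝ≥0∞`. -/
def supNormI (f : ℝ → ℝ) : ℝ≥0∞ := ⨆ θ : I14, (‖f (θ : ℝ)‖₊ : ℝ≥0∞)

/-- `α`-Hölder seminorm over `[-π/4, π/4]`, valued in `ℝ≥0∞`. -/
def hSemi (α : ℝ) (f : ℝ → ℝ) : ℝ≥0∞ :=
  ⨆ p : {q : I14 × I14 // (q.1 : ℝ) ≠ (q.2 : ℝ)},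
    (‖f (p.1.1 : ℝ) - f (p.1.2 : ℝ)‖₊ : ℝ≥0∞) /
      ENNReal.ofReal (|(p.1.1 : ℝ) - (p.1.2 : ℝ)| ^ α)

/-- The `C^{k,α}` norm on `[-π/4,π/4]`:
`Σ_{j ≤ k} sup |f^{(j)}| + Hölder seminorm of f^{(k)}`, valued in `ℝ≥0∞`. -/
def CkaNorm (k : ℕ) (α : ℝ) (f : ℝ → ℝ) : ℝ≥0∞ :=
  (Finset.range (k+1)).sum (fun j => supNormI (iteratedDerivWithin j f I14)) +
    hSemi α (iteratedDerivWithin k f I14)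

/-- The `C^k` norm `Σ_{j ≤ k} sup |f^{(j)}|` on `[-π/4,π/4]`, valued in `ℝ≥0∞`. -/
def CkNorm (k : ℕ) (f : ℝ → ℝ) : ℝ≥0∞ :=
  (Finset.range (k+1)).sum (fun j => supNormI (iteratedDerivWithin j f I14))


/-!
Differentiating the system, each of the five quantities `g, ∂θg, P, ∂θP, P + ∂θθP` obeys a
transport equation `∂ₜu + 2G ∂θu = S`. Where `u(t,·)` attains its minimum over `[0, π/4]` the
transport term vanishes: `G` vanishes at both ends (oddness and the boundary condition), and
`∂θu = 0` inside. If moreover all five quantities are `≥ -δ` there, then `S ≥ -Kδ` with `K`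
depending only on sup bounds of `g, ∂θg, P`. The one delicate term is `P (g - 4G)` in the
equation for `∂θP`, which needs `G ≤ πδ/4`; this follows from `g ≥ -δ` by expressing `G`
through its Wronskians with `sin 2θ` and `cos 2θ`. Hence no quantity can ever touch the barrier
`-ε e^{(K+1)t}`, and letting `ε → 0` gives nonnegativity.
-/

section PartialDerivatives

variable {F : ℝ → ℝ → ℝ} {s t : Set ℝ} {x y : ℝ}

theorem DifferentiableWithinAt.hasDerivWithinAt_slice_right
    (hF : DifferentiableWithinAt ℝ ↿F (s ×ˢ t) (x, y)) (hx : x ∈ s) :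
    HasDerivWithinAt (F x) (fderivWithin ℝ ↿F (s ×ˢ t) (x, y) (0, 1)) t y :=
  hF.hasFDerivWithinAt.comp_hasDerivWithinAt (x := y) (f := fun y => (x, y))
    ((hasDerivAt_const y x).prodMk (hasDerivAt_id y)).hasDerivWithinAt
    (fun _ hy => ⟨hx, hy⟩)

theorem DifferentiableWithinAt.hasDerivWithinAt_slice_left
    (hF : DifferentiableWithinAt ℝ ↿F (s ×ˢ t) (x, y)) (hy : y ∈ t) :
    HasDerivWithinAt (F · y) (fderivWithin ℝ ↿F (s ×ˢ t) (x, y) (1, 0)) s x :=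
  hF.hasFDerivWithinAt.comp_hasDerivWithinAt (x := x) (f := fun x => (x, y))
    ((hasDerivAt_id x).prodMk (hasDerivAt_const x y)).hasDerivWithinAt
    (fun _ hx => ⟨hx, hy⟩)

theorem ContDiffOn.slice_right {n : WithTop ℕ∞} (hF : ContDiffOn ℝ n ↿F (s ×ˢ t))
    (hx : x ∈ s) : ContDiffOn ℝ n (F x) t :=
  hF.comp (contDiff_const.prodMk contDiff_id).contDiffOn fun _ hy => ⟨hx, hy⟩

theorem ContDiffOn.derivWithin_right {m : ℕ} {n : WithTop ℕ∞} (hF : ContDiffOn ℝ n ↿F (s ×ˢ t))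
    (hs : UniqueDiffOn ℝ s) (ht : UniqueDiffOn ℝ t) (hmn : m + 1 ≤ n) :
    ContDiffOn ℝ m ↿(fun x => derivWithin (F x) t) (s ×ˢ t) := by
  refine ((hF.fderivWithin (hs.prod ht) hmn).clm_apply
    (contDiffOn_const (c := ((0 : ℝ), (1 : ℝ))))).congr ?_
  rintro ⟨x, y⟩ ⟨hx, hy⟩
  exact (((hF.differentiableOn fun h => by simp [h] at hmn) _ ⟨hx, hy⟩).hasDerivWithinAt_slice_right
    hx).derivWithin (ht y hy)

theorem ContDiffOn.derivWithin_left {m : ℕ} {n : WithTop ℕ∞} (hF : ContDiffOn ℝ n ↿F (s ×ˢ t))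
    (hs : UniqueDiffOn ℝ s) (ht : UniqueDiffOn ℝ t) (hmn : m + 1 ≤ n) :
    ContDiffOn ℝ m ↿(fun x y => derivWithin (F · y) s x) (s ×ˢ t) := by
  refine ((hF.fderivWithin (hs.prod ht) hmn).clm_apply
    (contDiffOn_const (c := ((1 : ℝ), (0 : ℝ))))).congr ?_
  rintro ⟨x, y⟩ ⟨hx, hy⟩
  exact (((hF.differentiableOn fun h => by simp [h] at hmn) _ ⟨hx, hy⟩).hasDerivWithinAt_slice_left
    hy).derivWithin (hs x hx)

theorem fderivWithin_apply_comm {E : Type*} [NormedAddCommGroup E] [NormedSpace ℝ E]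
    {f : E → ℝ} {u : Set E} (hf : ContDiffOn ℝ 2 f u) (hu : Convex ℝ u)
    (hu' : (interior u).Nonempty) {q : E} (hq : q ∈ u) (v w : E) :
    fderivWithin ℝ (fun p => fderivWithin ℝ f u p v) u q w
      = fderivWithin ℝ (fun p => fderivWithin ℝ f u p w) u q v := by
  have hud : UniqueDiffOn ℝ u := uniqueDiffOn_convex hu hu'
  have hsymm : IsSymmSndFDerivWithinAt ℝ f u q :=
    (hf q hq).isSymmSndFDerivWithinAt (by simp) hud
      (by rw [hu.closure_interior_eq_closure_of_nonempty_interior hu']; exact subset_closure hq) hq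
  have hdiff : DifferentiableWithinAt ℝ (fderivWithin ℝ f u) u q :=
    (hf.fderivWithin hud (m := 1) (by norm_num)).differentiableOn one_ne_zero q hq
  have happly : ∀ v : E, fderivWithin ℝ (fun p => fderivWithin ℝ f u p v) u q
      = (fderivWithin ℝ (fderivWithin ℝ f u) u q).flip v := fun v => by
    rw [fderivWithin_clm_apply (hud q hq) hdiff (differentiableWithinAt_const v),
      fderivWithin_const_apply, ContinuousLinearMap.comp_zero, zero_add]
  rw [happly, happly]
  exact hsymm w v

theorem hasDerivWithinAt_derivWithin_right_comm (hF : ContDiffOn ℝ 2 ↿F (s ×ˢ t))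
    (hs : Convex ℝ s) (ht : Convex ℝ t) (hs' : (interior s).Nonempty)
    (ht' : (interior t).Nonempty) (hx : x ∈ s) (hy : y ∈ t) :
    HasDerivWithinAt (fun x => derivWithin (F x) t y)
      (derivWithin (fun y => derivWithin (F · y) s x) t y) s x := by
  have hsd := uniqueDiffOn_convex hs hs'
  have htd := uniqueDiffOn_convex ht ht'
  have hF1 := hF.derivWithin_right (m := 1) hsd htd le_rfl
  have hF2 := hF.derivWithin_left (m := 1) hsd htd le_rfl
  have hxy : (x, y) ∈ s ×ˢ t := ⟨hx, hy⟩
  have hd : ∀ q ∈ s ×ˢ t, DifferentiableWithinAt ℝ ↿F (s ×ˢ t) q :=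
    hF.differentiableOn (by norm_num)
  have h1 : ↿(fun x => derivWithin (F x) t) =ᶠ[𝓝[s ×ˢ t] (x, y)]
      fun q => fderivWithin ℝ ↿F (s ×ˢ t) q (0, 1) := by
    filter_upwards [self_mem_nhdsWithin] with q hq
    exact ((hd q hq).hasDerivWithinAt_slice_right hq.1).derivWithin (htd q.2 hq.2)
  have h2 : ↿(fun x y => derivWithin (F · y) s x) =ᶠ[𝓝[s ×ˢ t] (x, y)]
      fun q => fderivWithin ℝ ↿F (s ×ˢ t) q (1, 0) := by
    filter_upwards [self_mem_nhdsWithin] with q hq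
    exact ((hd q hq).hasDerivWithinAt_slice_left hq.2).derivWithin (hsd q.1 hq.1)
  rw [((hF2.differentiableOn one_ne_zero _ hxy).hasDerivWithinAt_slice_right hx).derivWithin
      (htd y hy), h2.fderivWithin_eq (h2.eq_of_nhdsWithin hxy),
    ← fderivWithin_apply_comm hF (hs.prod ht) (by simp [interior_prod_eq, hs', ht']) hxy,
    ← h1.fderivWithin_eq (h1.eq_of_nhdsWithin hxy)]
  exact (hF1.differentiableOn one_ne_zero _ hxy).hasDerivWithinAt_slice_left hy

theorem hasDerivWithinAt_derivWithin_right_of_left {Fₓ : ℝ → ℝ} {Fₓ' : ℝ}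
    (hF : ContDiffOn ℝ 2 ↿F (s ×ˢ t)) (hs : Convex ℝ s) (ht : Convex ℝ t)
    (hs' : (interior s).Nonempty) (ht' : (interior t).Nonempty) (hx : x ∈ s) (hy : y ∈ t)
    (hFₓ : ∀ y ∈ t, HasDerivWithinAt (F · y) (Fₓ y) s x) (hFₓ' : HasDerivWithinAt Fₓ Fₓ' t y) :
    HasDerivWithinAt (fun x => derivWithin (F x) t y) Fₓ' s x := by
  have hsd := uniqueDiffOn_convex hs hs'
  convert hasDerivWithinAt_derivWithin_right_comm hF hs ht hs' ht' hx hy using 1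
  rw [derivWithin_congr (fun y hy => (hFₓ y hy).derivWithin (hsd x hx))
    ((hFₓ y hy).derivWithin (hsd x hx)), hFₓ'.derivWithin (uniqueDiffOn_convex ht ht' y hy)]

end PartialDerivatives

theorem mul_sub_le_image_sub_of_le_hasDerivWithinAt {f f' : ℝ → ℝ} {a b C : ℝ}
    (hf : ∀ x ∈ Icc a b, HasDerivWithinAt f (f' x) (Icc a b) x)
    (hC : ∀ x ∈ Icc a b, C ≤ f' x) {x y : ℝ} (hx : x ∈ Icc a b) (hy : y ∈ Icc a b)
    (hxy : x ≤ y) : C * (y - x) ≤ f y - f x := by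
  have hderiv : ∀ z ∈ interior (Icc a b), HasDerivAt f (f' z) z := fun z hz =>
    (hf z (interior_subset hz)).hasDerivAt (mem_interior_iff_mem_nhds.1 hz)
  exact (convex_Icc a b).mul_sub_le_image_sub_of_le_deriv
    (fun z hz => (hf z hz).continuousWithinAt)
    (fun z hz => (hderiv z hz).differentiableAt.differentiableWithinAt)
    (fun z hz => (hderiv z hz).deriv ▸ hC z (interior_subset hz)) x hx y hy hxy

theorem iteratedDerivWithin_two_eq {f : ℝ → ℝ} {s : Set ℝ} :
    iteratedDerivWithin 2 f s = derivWithin (derivWithin f s) s := by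
  rw [iteratedDerivWithin_succ, iteratedDerivWithin_one]

theorem ContDiffOn.hasDerivWithinAt_derivWithin {f : ℝ → ℝ} {s : Set ℝ} {x : ℝ}
    {n : WithTop ℕ∞} (hf : ContDiffOn ℝ n f s) (hn : 2 ≤ n) (hs : UniqueDiffOn ℝ s)
    (hx : x ∈ s) :
    HasDerivWithinAt (derivWithin f s) (derivWithin (derivWithin f s) s x) s x :=
  ((hf.derivWithin hs (m := 1) hn).differentiableOn one_ne_zero x hx).hasDerivWithinAt

theorem HasDerivWithinAt.nonpos_of_isMinOn_Icc {f : ℝ → ℝ} {a b L : ℝ} (hab : a < b)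
    (hf : HasDerivWithinAt f L (Icc a b) b) (hmin : IsMinOn f (Icc a b) b) : L ≤ 0 := by
  have hcone : a - b ∈ posTangentConeAt (Icc a b) b :=
    sub_mem_posTangentConeAt_of_segment_subset ((convex_Icc a b).segment_subset
      (right_mem_Icc.2 hab.le) (left_mem_Icc.2 hab.le))
  have := hmin.localize.hasFDerivWithinAt_nonneg hf.hasFDerivWithinAt hcone
  simp only [ContinuousLinearMap.toSpanSingleton_apply, smul_eq_mul] at this
  nlinarith

theorem mul_derivWithin_eq_zero_of_isMinOn {u v : ℝ → ℝ} {s : Set ℝ} {a b x : ℝ}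
    (hab : Icc a b ⊆ s) (hva : v a = 0) (hvb : v b = 0) (hx : x ∈ Icc a b)
    (hmin : IsMinOn u (Icc a b) x) : v x * derivWithin u s x = 0 := by
  rcases hx.1.eq_or_lt with rfl | hax
  · rw [hva, zero_mul]
  rcases hx.2.eq_or_lt with rfl | hxb
  · rw [hvb, zero_mul]
  have hnhds : Icc a b ∈ 𝓝 x := Icc_mem_nhds hax hxb
  rw [derivWithin_of_mem_nhds (Filter.mem_of_superset hnhds hab),
    (hmin.isLocalMin hnhds).deriv_eq_zero, mul_zero]

theorem hasDerivAt_sin_two_mul (x : ℝ) :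
    HasDerivAt (fun θ => sin (2 * θ)) (2 * cos (2 * x)) x := by
  simpa [mul_comm] using ((hasDerivAt_id x).const_mul 2).sin

theorem hasDerivAt_cos_two_mul (x : ℝ) :
    HasDerivAt (fun θ => cos (2 * θ)) (-(2 * sin (2 * x))) x := by
  simpa [mul_comm] using ((hasDerivAt_id x).const_mul 2).cos

theorem sin_cos_mem_Icc_zero_one {θ : ℝ} (hθ : θ ∈ Icc 0 (π / 2)) :
    sin θ ∈ Icc 0 1 ∧ cos θ ∈ Icc 0 1 :=
  ⟨⟨sin_nonneg_of_nonneg_of_le_pi hθ.1 (by linarith [hθ.2, pi_pos]), sin_le_one θ⟩,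
    ⟨cos_nonneg_of_mem_Icc ⟨by linarith [hθ.1, pi_pos], hθ.2⟩, cos_le_one θ⟩⟩

theorem two_mul_mem_Icc_of_mem_Icc {θ : ℝ} (hθ : θ ∈ Icc 0 (π / 4)) : 2 * θ ∈ Icc 0 (π / 2) :=
  ⟨by linarith [hθ.1], by linarith [hθ.2]⟩

theorem neg_le_mul_of_mem_Icc_zero_one {x y δ : ℝ} (hx : x ∈ Icc 0 1) (hy : -δ ≤ y)
    (hδ : 0 ≤ δ) : -δ ≤ x * y := by
  nlinarith [mul_nonneg hx.1 (neg_le_iff_add_nonneg.1 hy), mul_nonneg (sub_nonneg.2 hx.2) hδ]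

theorem neg_add_le_mul_of_mem_Icc {x y a b c d : ℝ} (hx : x ∈ Icc (-a) b) (hy : y ∈ Icc (-c) d)
    (ha : 0 ≤ a) (hb : 0 ≤ b) (hc : 0 ≤ c) (hd : 0 ≤ d) : -(a * d + b * c) ≤ x * y := by
  rcases le_total 0 x with h | h
  · nlinarith [mul_le_mul_of_nonneg_left hy.1 h, mul_le_mul_of_nonneg_right hx.2 hc,
      mul_nonneg ha hd]
  · nlinarith [mul_le_mul_of_nonpos_left hy.2 h, mul_le_mul_of_nonneg_right hx.1 hd,
      mul_nonneg hb hc]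

section Helmholtz

/- `G₁` stands for `G'`: these are the Wronskians of `G` with the solutions `sin 2θ`, `cos 2θ`
of `G'' + 4G = 0`. -/

def wronskianSin (G G₁ : ℝ → ℝ) (θ : ℝ) : ℝ := sin (2 * θ) * G₁ θ - 2 * cos (2 * θ) * G θ

def wronskianCos (G G₁ : ℝ → ℝ) (θ : ℝ) : ℝ := cos (2 * θ) * G₁ θ + 2 * sin (2 * θ) * G θ

variable {G G₁ g : ℝ → ℝ} {s : Set ℝ} {x θ δ M : ℝ}

theorem two_mul_eq_wronskian (θ : ℝ) :
    2 * G θ = sin (2 * θ) * wronskianCos G G₁ θ - cos (2 * θ) * wronskianSin G G₁ θ := by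
  simp only [wronskianSin, wronskianCos]
  linear_combination (-(2 * G θ)) * sin_sq_add_cos_sq (2 * θ)

theorem eq_wronskian (θ : ℝ) :
    G₁ θ = sin (2 * θ) * wronskianSin G G₁ θ + cos (2 * θ) * wronskianCos G G₁ θ := by
  simp only [wronskianSin, wronskianCos]
  linear_combination (-G₁ θ) * sin_sq_add_cos_sq (2 * θ)

theorem hasDerivWithinAt_wronskianSin (hG : HasDerivWithinAt G (G₁ x) s x)
    (hG₁ : HasDerivWithinAt G₁ (g x - 4 * G x) s x) :
    HasDerivWithinAt (wronskianSin G G₁) (sin (2 * x) * g x) s x :=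
  (((hasDerivAt_sin_two_mul x).hasDerivWithinAt.mul hG₁).sub
    (((hasDerivAt_cos_two_mul x).hasDerivWithinAt.const_mul 2).mul hG)).congr_deriv (by ring)

theorem hasDerivWithinAt_wronskianCos (hG : HasDerivWithinAt G (G₁ x) s x)
    (hG₁ : HasDerivWithinAt G₁ (g x - 4 * G x) s x) :
    HasDerivWithinAt (wronskianCos G G₁) (cos (2 * x) * g x) s x :=
  (((hasDerivAt_cos_two_mul x).hasDerivWithinAt.mul hG₁).add
    (((hasDerivAt_sin_two_mul x).hasDerivWithinAt.const_mul 2).mul hG)).congr_deriv (by ring)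

structure HelmholtzDirichlet (G G₁ g : ℝ → ℝ) : Prop where
  hasDerivWithinAt : ∀ x ∈ Icc 0 (π / 4), HasDerivWithinAt G (G₁ x) (Icc 0 (π / 4)) x
  hasDerivWithinAt_deriv :
    ∀ x ∈ Icc 0 (π / 4), HasDerivWithinAt G₁ (g x - 4 * G x) (Icc 0 (π / 4)) x
  left : G 0 = 0
  right : G (π / 4) = 0

theorem HelmholtzDirichlet.neg (h : HelmholtzDirichlet G G₁ g) :
    HelmholtzDirichlet (fun x => -G x) (fun x => -G₁ x) (fun x => -g x) where
  hasDerivWithinAt x hx := (h.hasDerivWithinAt x hx).neg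
  hasDerivWithinAt_deriv x hx := (h.hasDerivWithinAt_deriv x hx).neg.congr_deriv (by ring)
  left := by simp [h.left]
  right := by simp [h.right]

theorem HelmholtzDirichlet.wronskian_bounds (h : HelmholtzDirichlet G G₁ g) (hδ : 0 ≤ δ)
    (hg : ∀ x ∈ Icc 0 (π / 4), -δ ≤ g x) (hθ : θ ∈ Icc 0 (π / 4)) :
    -(π / 4 * δ) ≤ wronskianSin G G₁ θ ∧ wronskianCos G G₁ θ ≤ π / 4 * δ := by
  have h0 : (0 : ℝ) ∈ Icc 0 (π / 4) := ⟨le_rfl, by positivity⟩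
  have hπ : π / 4 ∈ Icc 0 (π / 4) := ⟨by positivity, le_rfl⟩
  have hsin : ∀ x ∈ Icc 0 (π / 4), -δ ≤ sin (2 * x) * g x := fun x hx =>
    neg_le_mul_of_mem_Icc_zero_one (sin_cos_mem_Icc_zero_one (two_mul_mem_Icc_of_mem_Icc hx)).1
      (hg x hx) hδ
  have hcos : ∀ x ∈ Icc 0 (π / 4), -δ ≤ cos (2 * x) * g x := fun x hx =>
    neg_le_mul_of_mem_Icc_zero_one (sin_cos_mem_Icc_zero_one (two_mul_mem_Icc_of_mem_Icc hx)).2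
      (hg x hx) hδ
  have hφ := mul_sub_le_image_sub_of_le_hasDerivWithinAt (fun x hx =>
    hasDerivWithinAt_wronskianSin (h.hasDerivWithinAt x hx) (h.hasDerivWithinAt_deriv x hx))
    hsin h0 hθ hθ.1
  have hψ := mul_sub_le_image_sub_of_le_hasDerivWithinAt (fun x hx =>
    hasDerivWithinAt_wronskianCos (h.hasDerivWithinAt x hx) (h.hasDerivWithinAt_deriv x hx))
    hcos hθ hπ hθ.2
  have hφ0 : wronskianSin G G₁ 0 = 0 := by simp [wronskianSin, h.left]
  have hψπ : wronskianCos G G₁ (π / 4) = 0 := by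
    simp [wronskianCos, h.right, show 2 * (π / 4) = π / 2 by ring]
  constructor <;> nlinarith [hθ.1, hθ.2]

theorem HelmholtzDirichlet.le_of_neg_le (h : HelmholtzDirichlet G G₁ g) (hδ : 0 ≤ δ)
    (hg : ∀ x ∈ Icc 0 (π / 4), -δ ≤ g x) (hθ : θ ∈ Icc 0 (π / 4)) :
    G θ ≤ π / 4 * δ := by
  obtain ⟨hφ, hψ⟩ := h.wronskian_bounds hδ hg hθ
  obtain ⟨hs, hc⟩ := sin_cos_mem_Icc_zero_one (two_mul_mem_Icc_of_mem_Icc hθ)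
  have hπδ : 0 ≤ π / 4 * δ := by positivity
  have := two_mul_eq_wronskian (G := G) (G₁ := G₁) θ
  nlinarith [mul_le_mul_of_nonneg_left hψ hs.1, mul_le_mul_of_nonneg_left hφ hc.1,
    mul_nonneg hπδ (sub_nonneg.2 hs.2), mul_nonneg hπδ (sub_nonneg.2 hc.2)]

theorem HelmholtzDirichlet.abs_le_of_abs_le (h : HelmholtzDirichlet G G₁ g)
    (hg : ∀ x ∈ Icc 0 (π / 4), |g x| ≤ M) (hθ : θ ∈ Icc 0 (π / 4)) :
    |G θ| ≤ π / 4 * M ∧ |G₁ θ| ≤ π / 2 * M := by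
  have hM : 0 ≤ M := (abs_nonneg _).trans (hg 0 ⟨le_rfl, by positivity⟩)
  obtain ⟨hφ, hψ⟩ := h.wronskian_bounds hM (fun x hx => (abs_le.1 (hg x hx)).1) hθ
  obtain ⟨hφ', hψ'⟩ := h.neg.wronskian_bounds hM
    (fun x hx => by linarith [(abs_le.1 (hg x hx)).2]) hθ
  simp only [wronskianSin, wronskianCos] at hφ' hψ'
  have hφabs : |wronskianSin G G₁ θ| ≤ π / 4 * M :=
    abs_le.2 ⟨hφ, by simp only [wronskianSin]; linarith⟩
  have hψabs : |wronskianCos G G₁ θ| ≤ π / 4 * M :=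
    abs_le.2 ⟨by simp only [wronskianCos]; linarith, hψ⟩
  have hmul : ∀ {a b : ℝ}, |a| ≤ 1 → |a * b| ≤ |b| := fun ha => by
    rw [abs_mul]; exact mul_le_of_le_one_left (abs_nonneg _) ha
  have hs := hmul (b := wronskianSin G G₁ θ) (abs_sin_le_one (2 * θ))
  have hs' := hmul (b := wronskianCos G G₁ θ) (abs_sin_le_one (2 * θ))
  have hc := hmul (b := wronskianSin G G₁ θ) (abs_cos_le_one (2 * θ))
  have hc' := hmul (b := wronskianCos G G₁ θ) (abs_cos_le_one (2 * θ))
  constructor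
  · have h2 := (abs_sub _ _).trans (add_le_add hs' hc)
    rw [← two_mul_eq_wronskian, abs_mul, abs_two] at h2
    linarith
  · rw [eq_wronskian (G := G) (G₁ := G₁)]
    linarith [abs_add_le (sin (2 * θ) * wronskianSin G G₁ θ) (cos (2 * θ) * wronskianCos G G₁ θ)]

end Helmholtz

section FirstTouching

variable {α ι : Type*} [TopologicalSpace α] [T2Space α] {Φ : ι → ℝ → α → ℝ} {T : ℝ} {D : Set α}

theorem exists_first_zero [Finite ι] (hD : IsCompact D)
    (hcont : ∀ i, ContinuousOn ↿(Φ i) (Icc 0 T ×ˢ D)) (hinit : ∀ i, ∀ y ∈ D, 0 < Φ i 0 y)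
    (hbad : ∃ i, ∃ t ∈ Icc 0 T, ∃ y ∈ D, Φ i t y ≤ 0) :
    ∃ t₀ ∈ Ioc 0 T, (∀ s ∈ Ico 0 t₀, ∀ j, ∀ y ∈ D, 0 < Φ j s y) ∧
      (∀ j, ∀ y ∈ D, 0 ≤ Φ j t₀ y) ∧ ∃ i, ∃ θ ∈ D, Φ i t₀ θ = 0 := by
  set B := ⋃ i, (Icc 0 T ×ˢ D) ∩ ↿(Φ i) ⁻¹' Iic 0
  have hB : IsCompact B := by
    refine (isCompact_Icc.prod hD).of_isClosed_subset ?_ (iUnion_subset fun _ => inter_subset_left)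
    exact isClosed_iUnion_of_finite fun i =>
      (hcont i).preimage_isClosed_of_isClosed (isClosed_Icc.prod hD.isClosed) isClosed_Iic
  obtain ⟨i, t, ht, y, hy, hty⟩ := hbad
  obtain ⟨⟨t₀, θ⟩, hq, hmin⟩ := hB.exists_isMinOn ⟨(t, y), mem_iUnion.2 ⟨i, ⟨ht, hy⟩, hty⟩⟩
    continuousOn_fst
  obtain ⟨i₀, ⟨ht₀, hθ⟩, hi₀⟩ := mem_iUnion.1 hq
  have ht₀pos : 0 < t₀ := ht₀.1.lt_of_ne fun h => (hinit i₀ θ hθ).not_ge (h ▸ hi₀)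
  have hbefore : ∀ s ∈ Ico 0 t₀, ∀ j, ∀ y ∈ D, 0 < Φ j s y := by
    intro s hs j y hy
    by_contra! hle
    have : t₀ ≤ s := isMinOn_iff.1 hmin (s, y)
      (mem_iUnion.2 ⟨j, ⟨⟨hs.1, hs.2.le.trans ht₀.2⟩, hy⟩, hle⟩)
    exact this.not_gt hs.2
  have hat : ∀ j, ∀ y ∈ D, 0 ≤ Φ j t₀ y := fun j y hy => by
    have hslice : ContinuousOn (Φ j · y) (Icc 0 t₀) :=
      (hcont j).comp (continuous_id.prodMk continuous_const).continuousOn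
        fun s hs => ⟨Icc_subset_Icc_right ht₀.2 hs, hy⟩
    rw [← closure_Ico ht₀pos.ne] at hslice
    exact le_on_closure (fun s hs => (hbefore s hs j y hy).le) continuousOn_const hslice
      (by rw [closure_Ico ht₀pos.ne]; exact right_mem_Icc.2 ht₀pos.le)
  exact ⟨t₀, ⟨ht₀pos, ht₀.2⟩, hbefore, hat, i₀, θ, hθ, le_antisymm hi₀ (hat i₀ θ hθ)⟩

theorem pos_add_mul_exp_of_touching [Finite ι] {X : ι → ℝ → α → ℝ} {K ε : ℝ} (hD : IsCompact D)
    (hcont : ∀ i, ContinuousOn ↿(X i) (Icc 0 T ×ˢ D)) (hinit : ∀ i, ∀ y ∈ D, 0 ≤ X i 0 y)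
    (htouch : ∀ t ∈ Ioc 0 T, ∀ δ > 0, (∀ j, ∀ y ∈ D, -δ ≤ X j t y) → ∀ i, ∀ θ ∈ D,
      X i t θ = -δ → ∃ L, HasDerivWithinAt (X i · θ) L (Icc 0 T) t ∧ -(K * δ) ≤ L)
    (hε : 0 < ε) : ∀ i, ∀ t ∈ Icc 0 T, ∀ θ ∈ D, 0 < X i t θ + ε * exp ((K + 1) * t) := by
  by_contra! hbad
  obtain ⟨t₀, ht₀, hbefore, hat, i, θ, hθ, hzero⟩ :=
    exists_first_zero (Φ := fun i t y => X i t y + ε * exp ((K + 1) * t)) hD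
      (fun i => (hcont i).add (by fun_prop))
      (fun i y hy => by simpa using add_pos_of_nonneg_of_pos (hinit i y hy) hε) hbad
  set δ := ε * exp ((K + 1) * t₀)
  have hδ : 0 < δ := by positivity
  obtain ⟨L, hL, hLK⟩ := htouch t₀ ht₀ δ hδ (fun j y hy => by linarith [hat j y hy]) i θ hθ
    (by linarith)
  have hbarrier : HasDerivAt (fun s => ε * exp ((K + 1) * s)) ((K + 1) * δ) t₀ :=
    (((hasDerivAt_id' t₀).const_mul (K + 1)).exp.const_mul ε).congr_deriv (by ring)
  have hmin : IsMinOn (fun s => X i s θ + ε * exp ((K + 1) * s)) (Icc 0 t₀) t₀ := fun s hs => by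
    show X i t₀ θ + δ ≤ X i s θ + ε * exp ((K + 1) * s)
    rcases hs.2.lt_or_eq with hlt | rfl
    · linarith [hbefore s ⟨hs.1, hlt⟩ i θ hθ]
    · exact le_rfl
  have := ((hL.add hbarrier.hasDerivWithinAt).mono
    (Icc_subset_Icc_right ht₀.2)).nonpos_of_isMinOn_Icc ht₀.1 hmin
  nlinarith

theorem nonneg_of_touching_deriv_ge [Finite ι] {X : ι → ℝ → α → ℝ} {K : ℝ} (hD : IsCompact D)
    (hcont : ∀ i, ContinuousOn ↿(X i) (Icc 0 T ×ˢ D)) (hinit : ∀ i, ∀ y ∈ D, 0 ≤ X i 0 y)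
    (htouch : ∀ t ∈ Ioc 0 T, ∀ δ > 0, (∀ j, ∀ y ∈ D, -δ ≤ X j t y) → ∀ i, ∀ θ ∈ D,
      X i t θ = -δ → ∃ L, HasDerivWithinAt (X i · θ) L (Icc 0 T) t ∧ -(K * δ) ≤ L)
    (i : ι) (t : ℝ) (ht : t ∈ Icc 0 T) (θ : α) (hθ : θ ∈ D) : 0 ≤ X i t θ := by
  refine le_of_forall_pos_lt_add fun η hη => ?_
  have := pos_add_mul_exp_of_touching hD hcont hinit htouch
    (ε := η / exp ((K + 1) * t)) (by positivity) i t ht θ hθ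
  rwa [div_mul_cancel₀ _ (exp_pos _).ne'] at this

end FirstTouching

theorem IsCompact.exists_forall_abs_le_of_continuousOn {E ι : Type*} [TopologicalSpace E]
    [Finite ι] {f : ι → E → ℝ} {K : Set E} (hK : IsCompact K) (hf : ∀ i, ContinuousOn (f i) K) :
    ∃ M, ∀ i, ∀ x ∈ K, |f i x| ≤ M := by
  choose M hM using fun i => hK.exists_bound_of_continuousOn (hf i)
  obtain ⟨N, hN⟩ := Finite.exists_le M
  exact ⟨N, fun i x hx => (hM i x hx).trans (hN i)⟩

theorem uniqueDiffOn_I14 : UniqueDiffOn ℝ I14 := uniqueDiffOn_Icc (by linarith [pi_pos])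

theorem interior_I14_nonempty : (interior I14).Nonempty := by
  rw [I14, interior_Icc]
  exact nonempty_Ioo.2 (by linarith [pi_pos])

theorem Icc_zero_subset_I14 : Icc 0 (π / 4) ⊆ I14 :=
  Icc_subset_Icc_left (by linarith [pi_pos])

def boussinesqObservables (g P : ℝ → ℝ → ℝ) : Fin 5 → ℝ → ℝ → ℝ :=
  ![g, fun t => derivWithin (g t) I14, P, fun t => derivWithin (P t) I14,
    fun t θ => P t θ + derivWithin (derivWithin (P t) I14) I14 θ]

def boussinesqSources (g P G : ℝ → ℝ → ℝ) : Fin 5 → ℝ → ℝ → ℝ :=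
  ![fun t θ => sin θ * P t θ + cos θ * derivWithin (P t) I14 θ,
    fun t θ => cos θ * (P t θ + derivWithin (derivWithin (P t) I14) I14 θ)
      - 2 * derivWithin (G t) I14 θ * derivWithin (g t) I14 θ,
    fun t θ => P t θ * derivWithin (G t) I14 θ,
    fun t θ => P t θ * (g t θ - 4 * G t θ) - derivWithin (G t) I14 θ * derivWithin (P t) I14 θ,
    fun t θ => P t θ * derivWithin (g t) I14 θ
      - 3 * derivWithin (G t) I14 θ * (P t θ + derivWithin (derivWithin (P t) I14) I14 θ)]

namespace OneDSol

variable {J : Set ℝ} {g P G : ℝ → ℝ → ℝ} {t θ : ℝ}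

theorem hasDerivWithinAt_G (hsol : OneDSol J g P G) (ht : t ∈ J) (hθ : θ ∈ I14) :
    HasDerivWithinAt (G t) (derivWithin (G t) I14 θ) I14 θ :=
  ((hsol.G_C2 t ht).differentiableOn two_ne_zero θ hθ).hasDerivWithinAt

theorem hasDerivWithinAt_derivWithin_G (hsol : OneDSol J g P G) (ht : t ∈ J) (hθ : θ ∈ I14) :
    HasDerivWithinAt (derivWithin (G t) I14) (g t θ - 4 * G t θ) I14 θ :=
  ((hsol.G_C2 t ht).hasDerivWithinAt_derivWithin le_rfl uniqueDiffOn_I14 hθ).congr_deriv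
    (by rw [← iteratedDerivWithin_two_eq]; linarith [hsol.G_eq t ht θ hθ])

theorem helmholtzDirichlet (hsol : OneDSol J g P G) (ht : t ∈ J) :
    HelmholtzDirichlet (G t) (derivWithin (G t) I14) (g t) where
  hasDerivWithinAt x hx :=
    (hsol.hasDerivWithinAt_G ht (Icc_zero_subset_I14 hx)).mono Icc_zero_subset_I14
  hasDerivWithinAt_deriv x hx :=
    (hsol.hasDerivWithinAt_derivWithin_G ht (Icc_zero_subset_I14 hx)).mono Icc_zero_subset_I14
  left := by
    have := hsol.G_odd t ht 0 (Icc_zero_subset_I14 ⟨le_rfl, by positivity⟩)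
    rw [neg_zero] at this
    linarith
  right := hsol.G_bc₁ t ht

theorem hasDerivWithinAt_g_time (hsol : OneDSol J g P G) (ht : t ∈ J) (hθ : θ ∈ I14) :
    HasDerivWithinAt (g · θ) (sin θ * P t θ + cos θ * derivWithin (P t) I14 θ
      - 2 * G t θ * derivWithin (g t) I14 θ) J t :=
  (hsol.reg_gt θ hθ t ht).hasDerivWithinAt.congr_deriv (by linarith [hsol.eq_g t ht θ hθ])

theorem hasDerivWithinAt_P_time (hsol : OneDSol J g P G) (ht : t ∈ J) (hθ : θ ∈ I14) :
    HasDerivWithinAt (P · θ) (P t θ * derivWithin (G t) I14 θ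
      - 2 * G t θ * derivWithin (P t) I14 θ) J t :=
  (hsol.reg_Pt θ hθ t ht).hasDerivWithinAt.congr_deriv (by linarith [hsol.eq_P t ht θ hθ])

theorem hasDerivWithinAt_derivWithin_g_time (hsol : OneDSol J g P G) (hJ : Convex ℝ J)
    (hJ' : (interior J).Nonempty) (hg : ContDiffOn ℝ 2 ↿g (J ×ˢ I14))
    (hP : ContDiffOn ℝ 2 ↿P (J ×ˢ I14)) (ht : t ∈ J) (hθ : θ ∈ I14) :
    HasDerivWithinAt (fun s => derivWithin (g s) I14 θ)
      (cos θ * (P t θ + derivWithin (derivWithin (P t) I14) I14 θ)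
        - 2 * derivWithin (G t) I14 θ * derivWithin (g t) I14 θ
        - 2 * G t θ * derivWithin (derivWithin (g t) I14) I14 θ) J t := by
  have hPθ := (hP.slice_right ht).hasDerivWithinAt_derivWithin le_rfl uniqueDiffOn_I14 hθ
  have hgθ := (hg.slice_right ht).hasDerivWithinAt_derivWithin le_rfl uniqueDiffOn_I14 hθ
  have hsource := (((hasDerivAt_sin θ).hasDerivWithinAt.fun_mul
    (hsol.reg_P t ht θ hθ).hasDerivWithinAt).fun_add
    ((hasDerivAt_cos θ).hasDerivWithinAt.fun_mul hPθ)).fun_sub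
    (((hsol.hasDerivWithinAt_G ht hθ).const_mul 2).fun_mul hgθ)
  exact hasDerivWithinAt_derivWithin_right_of_left hg hJ (convex_Icc _ _) hJ'
    interior_I14_nonempty ht hθ (fun _ hy => hsol.hasDerivWithinAt_g_time ht hy)
    (hsource.congr_deriv (by ring))

theorem hasDerivWithinAt_derivWithin_P_time (hsol : OneDSol J g P G) (hJ : Convex ℝ J)
    (hJ' : (interior J).Nonempty) (hP : ContDiffOn ℝ 2 ↿P (J ×ˢ I14)) (ht : t ∈ J)
    (hθ : θ ∈ I14) :
    HasDerivWithinAt (fun s => derivWithin (P s) I14 θ)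
      (P t θ * (g t θ - 4 * G t θ) - derivWithin (G t) I14 θ * derivWithin (P t) I14 θ
        - 2 * G t θ * derivWithin (derivWithin (P t) I14) I14 θ) J t := by
  have hPθ := (hP.slice_right ht).hasDerivWithinAt_derivWithin le_rfl uniqueDiffOn_I14 hθ
  have hsource := ((hsol.reg_P t ht θ hθ).hasDerivWithinAt.fun_mul
    (hsol.hasDerivWithinAt_derivWithin_G ht hθ)).fun_sub
    (((hsol.hasDerivWithinAt_G ht hθ).const_mul 2).fun_mul hPθ)
  exact hasDerivWithinAt_derivWithin_right_of_left hP hJ (convex_Icc _ _) hJ'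
    interior_I14_nonempty ht hθ (fun _ hy => hsol.hasDerivWithinAt_P_time ht hy)
    (hsource.congr_deriv (by ring))

theorem hasDerivWithinAt_derivWithin_derivWithin_P_time (hsol : OneDSol J g P G)
    (hJ : Convex ℝ J) (hJ' : (interior J).Nonempty) (hP : ContDiffOn ℝ 3 ↿P (J ×ˢ I14))
    (ht : t ∈ J) (hθ : θ ∈ I14) :
    HasDerivWithinAt (fun s => derivWithin (derivWithin (P s) I14) I14 θ)
      (P t θ * derivWithin (g t) I14 θ - 4 * P t θ * derivWithin (G t) I14 θ
        - 3 * derivWithin (G t) I14 θ * derivWithin (derivWithin (P t) I14) I14 θ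
        - 2 * G t θ * derivWithin (derivWithin (derivWithin (P t) I14) I14) I14 θ) J t := by
  have hPt := hP.slice_right ht
  have hPθ := hPt.hasDerivWithinAt_derivWithin (by norm_num) uniqueDiffOn_I14 hθ
  have hPθθ := (hPt.derivWithin uniqueDiffOn_I14 (m := 2)
    (by norm_num)).hasDerivWithinAt_derivWithin le_rfl uniqueDiffOn_I14 hθ
  have hG := hsol.hasDerivWithinAt_G ht hθ
  have hsource := (((hsol.reg_P t ht θ hθ).hasDerivWithinAt.fun_mul
    ((hsol.reg_g t ht θ hθ).hasDerivWithinAt.fun_sub (hG.const_mul 4))).fun_sub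
    ((hsol.hasDerivWithinAt_derivWithin_G ht hθ).fun_mul hPθ)).fun_sub
    ((hG.const_mul 2).fun_mul hPθθ)
  exact hasDerivWithinAt_derivWithin_right_of_left
    (hP.derivWithin_right (uniqueDiffOn_convex hJ hJ') uniqueDiffOn_I14 (m := 2) (by norm_num))
    hJ (convex_Icc _ _) hJ' interior_I14_nonempty ht hθ
    (fun _ hy => hsol.hasDerivWithinAt_derivWithin_P_time hJ hJ' (hP.of_le (by norm_num)) ht hy)
    (hsource.congr_deriv (by ring))

theorem hasDerivWithinAt_W_time (hsol : OneDSol J g P G) (hJ : Convex ℝ J)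
    (hJ' : (interior J).Nonempty) (hP : ContDiffOn ℝ 3 ↿P (J ×ˢ I14)) (ht : t ∈ J)
    (hθ : θ ∈ I14) :
    HasDerivWithinAt (fun s => P s θ + derivWithin (derivWithin (P s) I14) I14 θ)
      (P t θ * derivWithin (g t) I14 θ
        - 3 * derivWithin (G t) I14 θ * (P t θ + derivWithin (derivWithin (P t) I14) I14 θ)
        - 2 * G t θ * derivWithin (fun y => P t y + derivWithin (derivWithin (P t) I14) I14 y)
          I14 θ) J t := by
  have hPθθ := ((hP.slice_right ht).derivWithin uniqueDiffOn_I14 (m := 2)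
    (by norm_num)).hasDerivWithinAt_derivWithin le_rfl uniqueDiffOn_I14 hθ
  rw [((hsol.reg_P t ht θ hθ).hasDerivWithinAt.fun_add hPθθ).derivWithin (uniqueDiffOn_I14 θ hθ)]
  exact ((hsol.hasDerivWithinAt_P_time ht hθ).fun_add
    (hsol.hasDerivWithinAt_derivWithin_derivWithin_P_time hJ hJ' hP ht hθ)).congr_deriv (by ring)

theorem hasDerivWithinAt_boussinesqObservables (hsol : OneDSol J g P G) (hJ : Convex ℝ J)
    (hJ' : (interior J).Nonempty) (hg : ContDiffOn ℝ 2 ↿g (J ×ˢ I14))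
    (hP : ContDiffOn ℝ 3 ↿P (J ×ˢ I14)) (ht : t ∈ J) (hθ : θ ∈ I14) (i : Fin 5) :
    HasDerivWithinAt (boussinesqObservables g P i · θ) (boussinesqSources g P G i t θ
      - 2 * G t θ * derivWithin (boussinesqObservables g P i t) I14 θ) J t := by
  have hP2 : ContDiffOn ℝ 2 ↿P (J ×ˢ I14) := hP.of_le (by norm_num)
  fin_cases i
  · exact hsol.hasDerivWithinAt_g_time ht hθ
  · exact hsol.hasDerivWithinAt_derivWithin_g_time hJ hJ' hg hP2 ht hθ
  · exact hsol.hasDerivWithinAt_P_time ht hθ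
  · exact hsol.hasDerivWithinAt_derivWithin_P_time hJ hJ' hP2 ht hθ
  · exact hsol.hasDerivWithinAt_W_time hJ hJ' hP ht hθ

theorem neg_mul_le_boussinesqSources (hsol : OneDSol J g P G) (ht : t ∈ J) {M δ : ℝ}
    (hM : ∀ j, ∀ y ∈ Icc 0 (π / 4), |boussinesqObservables g P j t y| ≤ M)
    (hδ : 0 ≤ δ) (hlow : ∀ j, ∀ y ∈ Icc 0 (π / 4), -δ ≤ boussinesqObservables g P j t y)
    (i : Fin 5) (hθ : θ ∈ Icc 0 (π / 4)) (hi : boussinesqObservables g P i t θ = -δ) :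
    -((2 + (2 + 4 * π) * M) * δ) ≤ boussinesqSources g P G i t θ := by
  have hH := hsol.helmholtzDirichlet ht
  obtain ⟨hGabs, hGθabs⟩ := hH.abs_le_of_abs_le (fun y hy => hM 0 y hy) hθ
  have hGle := hH.le_of_neg_le hδ (fun y hy => hlow 0 y hy) hθ
  have hgM : |g t θ| ≤ M := hM 0 θ hθ
  have hgθM : |derivWithin (g t) I14 θ| ≤ M := hM 1 θ hθ
  have hPM : |P t θ| ≤ M := hM 2 θ hθ
  have hM0 : 0 ≤ M := (abs_nonneg _).trans hPM
  obtain ⟨hsin, hcos⟩ := sin_cos_mem_Icc_zero_one ⟨hθ.1, by linarith [hθ.2, pi_pos]⟩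
  have hg0 : -δ ≤ g t θ := hlow 0 θ hθ
  have hgθ0 : -δ ≤ derivWithin (g t) I14 θ := hlow 1 θ hθ
  have hP0 : -δ ≤ P t θ := hlow 2 θ hθ
  have hPθ0 : -δ ≤ derivWithin (P t) I14 θ := hlow 3 θ hθ
  have hW0 : -δ ≤ P t θ + derivWithin (derivWithin (P t) I14) I14 θ := hlow 4 θ hθ
  have hπMδ : 0 ≤ π * M * δ := by positivity
  have hGθδ : -(π / 2 * M) * δ ≤ derivWithin (G t) I14 θ * δ :=
    mul_le_mul_of_nonneg_right (abs_le.1 hGθabs).1 hδ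
  have hGθδ' : derivWithin (G t) I14 θ * δ ≤ π / 2 * M * δ :=
    mul_le_mul_of_nonneg_right (abs_le.1 hGθabs).2 hδ
  fin_cases i
  · change -_ ≤ sin θ * P t θ + cos θ * derivWithin (P t) I14 θ
    nlinarith [neg_le_mul_of_mem_Icc_zero_one hsin hP0 hδ,
      neg_le_mul_of_mem_Icc_zero_one hcos hPθ0 hδ]
  · change -_ ≤ cos θ * _ - 2 * _ * derivWithin (g t) I14 θ
    rw [show derivWithin (g t) I14 θ = -δ from hi]
    nlinarith [neg_le_mul_of_mem_Icc_zero_one hcos hW0 hδ]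
  · change -_ ≤ P t θ * _
    rw [show P t θ = -δ from hi]
    nlinarith
  · change -_ ≤ P t θ * (g t θ - 4 * G t θ) - _ * derivWithin (P t) I14 θ
    rw [show derivWithin (P t) I14 θ = -δ from hi]
    have hprod := neg_add_le_mul_of_mem_Icc ⟨hP0, (abs_le.1 hPM).2⟩
      (y := g t θ - 4 * G t θ) (c := δ + π * δ) (d := M + π * M)
      ⟨by linarith, by linarith [(abs_le.1 hgM).2, (abs_le.1 hGabs).1]⟩
      hδ hM0 (by positivity) (by positivity)
    nlinarith
  · change -_ ≤ P t θ * derivWithin (g t) I14 θ - 3 * _ * (P t θ + _)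
    rw [show P t θ + derivWithin (derivWithin (P t) I14) I14 θ = -δ from hi]
    have hprod := neg_add_le_mul_of_mem_Icc ⟨hP0, (abs_le.1 hPM).2⟩ ⟨hgθ0, (abs_le.1 hgθM).2⟩
      hδ hM0 hδ hM0
    nlinarith

theorem exists_hasDerivWithinAt_ge_of_touching (hsol : OneDSol J g P G) (hJ : Convex ℝ J)
    (hJ' : (interior J).Nonempty) (hg : ContDiffOn ℝ 2 ↿g (J ×ˢ I14))
    (hP : ContDiffOn ℝ 3 ↿P (J ×ˢ I14)) (ht : t ∈ J) {M δ : ℝ}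
    (hM : ∀ j, ∀ y ∈ Icc 0 (π / 4), |boussinesqObservables g P j t y| ≤ M)
    (hδ : 0 ≤ δ) (hlow : ∀ j, ∀ y ∈ Icc 0 (π / 4), -δ ≤ boussinesqObservables g P j t y)
    (i : Fin 5) (hθ : θ ∈ Icc 0 (π / 4)) (hi : boussinesqObservables g P i t θ = -δ) :
    ∃ L, HasDerivWithinAt (boussinesqObservables g P i · θ) L J t ∧
      -((2 + (2 + 4 * π) * M) * δ) ≤ L := by
  have hH := hsol.helmholtzDirichlet ht
  have hmin : IsMinOn (boussinesqObservables g P i t) (Icc 0 (π / 4)) θ := fun y hy =>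
    hi ▸ hlow i y hy
  have htransport := mul_derivWithin_eq_zero_of_isMinOn Icc_zero_subset_I14 hH.left hH.right hθ hmin
  refine ⟨_, ?_, hsol.neg_mul_le_boussinesqSources ht hM hδ hlow i hθ hi⟩
  have h := hsol.hasDerivWithinAt_boussinesqObservables hJ hJ' hg hP ht (Icc_zero_subset_I14 hθ) i
  rwa [mul_assoc, htransport, mul_zero, sub_zero] at h

end OneDSol

theorem continuousOn_boussinesqObservables {J : Set ℝ} {g P : ℝ → ℝ → ℝ}
    (hJ : UniqueDiffOn ℝ J) (hg : ContDiffOn ℝ 1 ↿g (J ×ˢ I14))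
    (hP : ContDiffOn ℝ 2 ↿P (J ×ˢ I14)) (i : Fin 5) :
    ContinuousOn ↿(boussinesqObservables g P i) (J ×ˢ I14) := by
  have hPθ := hP.derivWithin_right hJ uniqueDiffOn_I14 (m := 1) (by norm_num)
  fin_cases i
  · exact hg.continuousOn
  · exact (hg.derivWithin_right hJ uniqueDiffOn_I14 (m := 0) le_rfl).continuousOn
  · exact hP.continuousOn
  · exact hPθ.continuousOn
  · exact hP.continuousOn.add
      (hPθ.derivWithin_right hJ uniqueDiffOn_I14 (m := 0) le_rfl).continuousOn

/-- **Propagation of positivity and monotonicity for the 1D Boussinesq system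
(Lemma 4.3).** For a `C³` solution pair `(g,P)` on `[0,T] × [-π/4,π/4]` with `g(t,·)` odd
and `P(t,·)` even, the signs `g ≥ 0`, `∂_θ g ≥ 0`, `P ≥ 0`, `∂_θ P ≥ 0` and
`P + ∂_{θθ}P ≥ 0` on `[0,π/4]` are propagated from `t = 0` to all `t ∈ [0,T]`. -/
theorem oneD_boussinesq_positivity
    (T : ℝ) (hT : 0 < T) (g P G : ℝ → ℝ → ℝ)
    (hsol : OneDSol (Icc 0 T) g P G)
    (hgC3 : ContDiffOn ℝ 3 (fun q : ℝ × ℝ => g q.1 q.2) (Icc 0 T ×ˢ I14))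
    (hPC3 : ContDiffOn ℝ 3 (fun q : ℝ × ℝ => P q.1 q.2) (Icc 0 T ×ˢ I14))
    (hg0 : ∀ θ ∈ Icc (0:ℝ) (π/4), 0 ≤ g 0 θ ∧ 0 ≤ derivWithin (g 0) I14 θ)
    (hP0 : ∀ θ ∈ Icc (0:ℝ) (π/4),
      0 ≤ P 0 θ ∧ 0 ≤ derivWithin (P 0) I14 θ ∧
        0 ≤ P 0 θ + iteratedDerivWithin 2 (P 0) I14 θ) :
    ∀ t ∈ Icc (0:ℝ) T, ∀ θ ∈ Icc (0:ℝ) (π/4),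
      0 ≤ g t θ ∧ 0 ≤ derivWithin (g t) I14 θ ∧
      0 ≤ P t θ ∧ 0 ≤ derivWithin (P t) I14 θ ∧
      0 ≤ P t θ + iteratedDerivWithin 2 (P t) I14 θ := by
  simp only [iteratedDerivWithin_two_eq] at hP0 ⊢
  have hJ' : (interior (Icc 0 T)).Nonempty := by rw [interior_Icc]; exact nonempty_Ioo.2 hT
  have hg2 : ContDiffOn ℝ 2 ↿g (Icc 0 T ×ˢ I14) := hgC3.of_le (by norm_num)
  have hcont i := (continuousOn_boussinesqObservables (uniqueDiffOn_Icc hT) (hg2.of_le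
    (by norm_num)) (hPC3.of_le (by norm_num)) i).mono (prod_mono subset_rfl Icc_zero_subset_I14)
  obtain ⟨M, hM⟩ := (isCompact_Icc.prod isCompact_Icc).exists_forall_abs_le_of_continuousOn hcont
  have hX := nonneg_of_touching_deriv_ge isCompact_Icc hcont
    (fun i y hy => by
      fin_cases i
      exacts [(hg0 y hy).1, (hg0 y hy).2, (hP0 y hy).1, (hP0 y hy).2.1, (hP0 y hy).2.2])
    (fun t ht δ hδ hlow i θ hθ hi => hsol.exists_hasDerivWithinAt_ge_of_touching
      (convex_Icc 0 T) hJ' hg2 hPC3 (Ioc_subset_Icc_self ht)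
      (fun j y hy => hM j (t, y) ⟨Ioc_subset_Icc_self ht, hy⟩) hδ.le hlow i hθ hi)
  intro t ht θ hθ
  exact ⟨hX 0 t ht θ hθ, hX 1 t ht θ hθ, hX 2 t ht θ hθ, hX 3 t ht θ hθ, hX 4 t ht θ hθ⟩
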